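/- Let r ∈ ℝ with r³ ≠ 1 and r³ ≠ −2. On ℝ⁵ с coordinates (x,y,z,p,q), define x₁ = (3x−p)/4, y₁ = −(12^{2/3}/8)·y, z₁ = (z − xp + (3/2)x²)/4, p₁ = x, q₁ = −(12^{1/3}/6)·q, and define the linear functionals on tangent vectors v = (v_x,v_y,v_z,v_p,v_q): ω₂(v) = v_p + (2r³−5)v_x − 3r²v_y, ω₃(v) = v_q − 3r²v_x + 6r·v_y, ω₄(v) = v_y − r·v_x, ϖ(v) = v_z − p·v_x − q·v_y. Then at every point m and for every v: Dz₁(v) − p₁(m)Dx₁(v) − q₁(m)Dy₁(v) = (1/4)ϖ(v); Dp₁(v) − (2/(r³−1))Dx₁(v) + 12^{1/3}(r²/(r³−1))Dy₁(v) = (1/(2(r³−1)))ω₂(v); Dq₁(v) + 12^{1/3}(r²/(r³−1))Dx₁(v) + 12^{2/3}(r(r³−4)/(6(r³−1)))Dy₁(v) = −(12^{1/3}r²/(4(r³−1)))ω₂(v) − (12^{1/3}/6)ω₃(v); Dy₁(v) − (12^{2/3}r/(2(r³+2)))Dx₁(v) = (12^{2/3}r/(8(r³+2)))ω₂(v) +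 (12^{2/3}(r³−1)/(4(r³+2)))ω₄(v). -/

import Mathlib

noncomputable section

/-- Points (and tangent vectors) of `ℝ⁵`, coordinates `(x, y, z, p, q)`. -/
abbrev R5 : Type := ℝ × ℝ × ℝ × ℝ × ℝ

namespace Stmt12

/-- First component `x₁ = (3x − p)/4` of the coordinate diffeomorphism. -/
def x₁ (m : R5) : ℝ := (3 * m.1 - m.2.2.2.1) / 4
/-- Second component `y₁ = −(12^{2/3}/8)·y`. -/
def y₁ (m : R5) : ℝ := -((12 : ℝ) ^ ((2 : ℝ) / 3) / 8) * m.2.1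
/-- Third component `z₁ = (z − xp + (3/2)x²)/4`. -/
def z₁ (m : R5) : ℝ := (m.2.2.1 - m.1 * m.2.2.2.1 + 3 / 2 * m.1 ^ 2) / 4
/-- Fourth component `p₁ = x`. -/
def p₁ (m : R5) : ℝ := m.1
/-- Fifth component `q₁ = −(12^{1/3}/6)·q`. -/
def q₁ (m : R5) : ℝ := -((12 : ℝ) ^ ((1 : ℝ) / 3) / 6) * m.2.2.2.2

/-- The structural 1-form `ω₂ = dp + (2r³−5)dx − 3r²dy` evaluated on a tangent vector. -/
def ω₂ (r : ℝ) (v : R5) : ℝ := v.2.2.2.1 + (2 * r ^ 3 - 5) * v.1 - 3 * r ^ 2 * v.2.1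
/-- The structural 1-form `ω₃ = dq − 3r²dx + 6rdy` evaluated on a tangent vector. -/
def ω₃ (r : ℝ) (v : R5) : ℝ := v.2.2.2.2 - 3 * r ^ 2 * v.1 + 6 * r * v.2.1
/-- The structural 1-form `ω₄ = dy − rdx` evaluated on a tangent vector. -/
def ω₄ (r : ℝ) (v : R5) : ℝ := v.2.1 - r * v.1
/-- The contact form `ϖ = dz − pdx − qdy` evaluated at `m` on a tangent vector. -/
def ϖ (m v : R5) : ℝ := v.2.2.1 - m.2.2.2.1 * v.1 - m.2.2.2.2 * v.2.1

end Stmt12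

open Stmt12

/-!
The map `(x₁, y₁, z₁, p₁, q₁)` is linear in every component except `z₁`, which is quadratic, so
its differential is explicit. Substituting it, with `a = 12^{1/3}` and `12^{2/3} = a²`, each
identity becomes, after clearing the denominators `r³ − 1` and `r³ + 2`, a polynomial identity
in `r`, `a` and the coordinates of `m` and `v` that holds modulo `a³ = 12`.
-/

namespace Real

lemma rpow_one_div_three_pow_three {x : ℝ} (hx : 0 ≤ x) : (x ^ ((1 : ℝ) / 3)) ^ 3 = x := by
  rw [one_div]
  exact_mod_cast rpow_inv_natCast_pow hx three_ne_zero

lemma rpow_two_div_three {x : ℝ} (hx : 0 ≤ x) :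
    x ^ ((2 : ℝ) / 3) = (x ^ ((1 : ℝ) / 3)) ^ 2 := by
  rw [← rpow_mul_natCast hx]
  norm_num

end Real

namespace Stmt12

lemma fderiv_x₁_apply (m v : R5) : fderiv ℝ x₁ m v = (3 * v.1 - v.2.2.2.1) / 4 := by
  unfold x₁
  simp only [div_eq_mul_inv]
  simp (disch := fun_prop) [fderiv_fun_sub, fderiv_const_mul, fderiv_mul_const, fderiv.fst,
    fderiv.snd]
  ring

lemma fderiv_y₁_apply (m v : R5) :
    fderiv ℝ y₁ m v = -((12 : ℝ) ^ ((2 : ℝ) / 3) / 8) * v.2.1 := by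
  unfold y₁
  simp (disch := fun_prop) [fderiv_const_mul, fderiv.fst, fderiv.snd]

lemma fderiv_z₁_apply (m v : R5) :
    fderiv ℝ z₁ m v = (v.2.2.1 - m.1 * v.2.2.2.1 - m.2.2.2.1 * v.1 + 3 * m.1 * v.1) / 4 := by
  unfold z₁
  simp only [div_eq_mul_inv]
  simp (disch := fun_prop) [fderiv_fun_sub, fderiv_fun_add, fderiv_fun_mul, fderiv.fst,
    fderiv.snd, fderiv_fun_pow]
  ring

lemma fderiv_p₁_apply (m v : R5) : fderiv ℝ p₁ m v = v.1 := by
  unfold p₁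
  simp [fderiv_fst]

lemma fderiv_q₁_apply (m v : R5) :
    fderiv ℝ q₁ m v = -((12 : ℝ) ^ ((1 : ℝ) / 3) / 6) * v.2.2.2.2 := by
  unfold q₁
  simp (disch := fun_prop) [fderiv_const_mul, fderiv.snd]

end Stmt12

/-- The pullback of the (translated) standard structural 1-forms under the coordinate
diffeomorphism `(x₁,y₁,z₁,p₁,q₁)` lies in the span of `ϖ, ω₂, ω₃, ω₄`, with the explicit
coefficients recovering the parametrized solution
`(12^{2/3}r/(2(r³+2)), 2·12^{1/3}r²/(r³+2))` of Noth's equation. -/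
theorem recovering_noth_solution_one (r : ℝ) (hr1 : r ^ 3 ≠ 1) (hr2 : r ^ 3 ≠ -2) :
    ∀ m v : R5,
      (fderiv ℝ z₁ m v - p₁ m * fderiv ℝ x₁ m v - q₁ m * fderiv ℝ y₁ m v
        = (1 / 4) * ϖ m v)
      ∧ (fderiv ℝ p₁ m v - 2 / (r ^ 3 - 1) * fderiv ℝ x₁ m v
            + (12 : ℝ) ^ ((1 : ℝ) / 3) * (r ^ 2 / (r ^ 3 - 1)) * fderiv ℝ y₁ m v
          = (1 / (2 * (r ^ 3 - 1))) * ω₂ r v)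
      ∧ (fderiv ℝ q₁ m v + (12 : ℝ) ^ ((1 : ℝ) / 3) * (r ^ 2 / (r ^ 3 - 1)) * fderiv ℝ x₁ m v
            + (12 : ℝ) ^ ((2 : ℝ) / 3) * (r * (r ^ 3 - 4) / (6 * (r ^ 3 - 1)))
              * fderiv ℝ y₁ m v
          = -((12 : ℝ) ^ ((1 : ℝ) / 3) * r ^ 2 / (4 * (r ^ 3 - 1))) * ω₂ r v
            - ((12 : ℝ) ^ ((1 : ℝ) / 3) / 6) * ω₃ r v)
      ∧ (fderiv ℝ y₁ m v
            - ((12 : ℝ) ^ ((2 : ℝ) / 3) * r / (2 * (r ^ 3 + 2))) * fderiv ℝ x₁ m v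
          = ((12 : ℝ) ^ ((2 : ℝ) / 3) * r / (8 * (r ^ 3 + 2))) * ω₂ r v
            + ((12 : ℝ) ^ ((2 : ℝ) / 3) * (r ^ 3 - 1) / (4 * (r ^ 3 + 2))) * ω₄ r v) := by
  intro m v
  have hr1' : r ^ 3 - 1 ≠ 0 := sub_ne_zero.mpr hr1
  have hr2' : r ^ 3 + 2 ≠ 0 := fun h => hr2 (eq_neg_of_add_eq_zero_left h)
  have ha : ((12 : ℝ) ^ ((1 : ℝ) / 3)) ^ 3 = 12 :=
    Real.rpow_one_div_three_pow_three (by norm_num)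
  rw [fderiv_x₁_apply, fderiv_y₁_apply, fderiv_z₁_apply, fderiv_p₁_apply, fderiv_q₁_apply,
    Real.rpow_two_div_three (by norm_num)]
  set a : ℝ := (12 : ℝ) ^ ((1 : ℝ) / 3)
  refine ⟨?_, ?_, ?_, ?_⟩
  · simp only [p₁, q₁, ϖ]
    linear_combination (-(m.2.2.2.2 * v.2.1) / 48) * ha
  · simp only [ω₂]
    field_simp
    linear_combination (-8 * r ^ 2 * v.2.1) * ha
  · simp only [ω₂, ω₃]
    field_simp
    linear_combination (4 * a * r * (4 - r ^ 3) * v.2.1) * ha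
  · simp only [ω₂, ω₄]
    field_simp
    ring
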